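/- arXiv:1711.11435 — 4 statements merged into one kernel-verified Lean document; each statement's English description precedes it below -/
import Mathlib

section
/- Let R be an algebraic curvature tensor on a real inner product space E (satisfying the standard symmetries including the first Bianchi identity), and let B: E × E → F be a bilinear map into a vector space F with a symmetric bilinear form ⟨,⟩, such that B is skew-symmetric and R(X,Y,Z,W) = ⟨B(Y,W),B(X,Z)⟩ − ⟨B(X,W),B(Y,Z)⟩ for all X,Y,Z,W. Then ⟨B(X,Y),B(Z,W)⟩ = R(X,Y,Z,W) for all X,Y,Z,W. -/
/-- If `R` is an algebraic curvature tensor on a real inner product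
space `E` and `B : E × E → F` is a skew-symmetric bilinear map into a space `F`
with a symmetric bilinear form, satisfying the Gauss equation
`R(X,Y,Z,W) = ⟨B(Y,W),B(X,Z)⟩ − ⟨B(X,W),B(Y,Z)⟩`, then
`⟨B(X,Y),B(Z,W)⟩ = R(X,Y,Z,W)`. -/
theorem stmt_3 {E F : Type*} [NormedAddCommGroup E] [InnerProductSpace ℝ E]
    [AddCommGroup F] [Module ℝ F]
    (bil : F →ₗ[ℝ] F →ₗ[ℝ] ℝ) (hbil : ∀ u v : F, bil u v = bil v u)
    (R : E →ₗ[ℝ] E →ₗ[ℝ] E →ₗ[ℝ] E →ₗ[ℝ] ℝ)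
    (hR1 : ∀ X Y Z W : E, R X Y Z W = - R Y X Z W)
    (hR2 : ∀ X Y Z W : E, R X Y Z W = - R X Y W Z)
    (hR3 : ∀ X Y Z W : E, R X Y Z W = R Z W X Y)
    (hBianchi : ∀ X Y Z W : E, R X Y Z W + R Y Z X W + R Z X Y W = 0)
    (B : E →ₗ[ℝ] E →ₗ[ℝ] F)
    (hskew : ∀ X Y : E, B X Y = - B Y X)
    (hGauss : ∀ X Y Z W : E,
      R X Y Z W = bil (B Y W) (B X Z) - bil (B X W) (B Y Z)) :
    ∀ X Y Z W : E, bil (B X Y) (B Z W) = R X Y Z W := by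
  intro X Y Z W
  have h := hBianchi X Y Z W
  rw [hGauss X Y Z W, hGauss Y Z X W, hGauss Z X Y W,
    hskew Y X, hskew Z X, hskew Z Y] at h
  simp only [map_neg, LinearMap.neg_apply] at h
  have h1 := hbil (B Y W) (B X Z)
  have h2 := hbil (B Z W) (B X Y)
  have h3 := hbil (B X W) (B Y Z)
  rw [hGauss X Y Z W]
  linarith
end

section
/- Let (M,g) be a Riemannian manifold, V a finite-dimensional real vector space with nondegenerate symmetric bilinear form, and Ω a V-valued one-form on M satisfying ⟨Ω(X),Ω(Y)⟩ = g(X,Y) for all tangent vectors X, Y. Then the condition ⟨dΩ(X,Y),Ω(Z)⟩ = 0 for all X,Y,Z holds if and only if the tangential part of the flat connection D on the trivial bundle M × V, transported to TM via Ω, equals the Levi-Civita connection of g. -/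
/-! Measure the failure of `D^T = ∇` by the tensor `T(X, Y, Z) = g(D^T_X Y - ∇_X Y, Z)`.
Since `∇` is torsion-free, `⟨dΩ(X,Y), Ω Z⟩ = T(X,Y,Z) - T(Y,X,Z)`, so condition (b) says exactly
that `T` is symmetric in its first two slots. Since both `D` (flat, preserving `⟨·,·⟩`) and `∇`
are metric, `T` is antisymmetric in its last two slots. A tensor with both symmetries vanishes:
this is the uniqueness argument for the Levi-Civita connection. -/

theorem eq_zero_of_comm_of_neg_swap {ι G : Type*} [AddGroup G] [IsAddTorsionFree G]
    {T : ι → ι → ι → G} (hcomm : ∀ a b c, T a b c = T b a c)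
    (hanti : ∀ a b c, T a b c = -T a c b) (a b c : ι) : T a b c = 0 := by
  refine self_eq_neg.mp ?_
  calc T a b c = T b a c := hcomm a b c
    _ = -T b c a := hanti b a c
    _ = -T c b a := by rw [hcomm b c a]
    _ = T c a b := by rw [hanti c b a, neg_neg]
    _ = T a c b := hcomm c a b
    _ = -T a b c := hanti a c b

theorem fderiv_bilinear_apply {F U V : Type*} [NormedAddCommGroup F] [NormedSpace ℝ F]
    [NormedAddCommGroup U] [NormedSpace ℝ U] [FiniteDimensional ℝ U]
    [NormedAddCommGroup V] [NormedSpace ℝ V] [FiniteDimensional ℝ V]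
    (B : U →ₗ[ℝ] V →ₗ[ℝ] ℝ) {u : F → U} {w : F → V} {p : F}
    (hu : DifferentiableAt ℝ u p) (hw : DifferentiableAt ℝ w p) (v : F) :
    fderiv ℝ (fun q => B (u q) (w q)) p v
      = B (fderiv ℝ u p v) (w p) + B (u p) (fderiv ℝ w p v) := by
  change fderiv ℝ (fun q => B.toContinuousBilinearMap (u q) (w q)) p v = _
  rw [ContinuousLinearMap.fderiv_of_bilinear (B := B.toContinuousBilinearMap) hu hw]
  simp only [add_apply, ContinuousLinearMap.precompR_apply, ContinuousLinearMap.precompL_apply,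
    LinearMap.toContinuousBilinearMap_apply]
  exact add_comm _ _

section VirtualImmersion

variable {E V : Type*} [NormedAddCommGroup E] [NormedSpace ℝ E]
  [NormedAddCommGroup V] [NormedSpace ℝ V]
  (B : V →ₗ[ℝ] V →ₗ[ℝ] ℝ) (g : E → E →ₗ[ℝ] E →ₗ[ℝ] ℝ) (Ω : E → E →L[ℝ] V)
  (nabla : (E → E) → (E → E) → E → E)

/-- `g(D^T_X Y - ∇_X Y, z)` at `p`, once `B(Ω ·, Ω ·) = g` is known. -/
noncomputable def tangentialDefect (X Y : E → E) (p z : E) : ℝ :=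
  B (fderiv ℝ (fun q => Ω q (Y q)) p (X p)) (Ω p z) - g p (nabla X Y p) z

variable {B g Ω nabla}

theorem pairing_dΩ_eq_tangentialDefect_sub
    (ha : ∀ p (v w : E), B (Ω p v) (Ω p w) = g p v w)
    (htf : ∀ X Y : E → E, ContDiff ℝ (⊤ : ℕ∞) X → ContDiff ℝ (⊤ : ℕ∞) Y →
      ∀ p, nabla X Y p - nabla Y X p = fderiv ℝ Y p (X p) - fderiv ℝ X p (Y p))
    {X Y : E → E} (hX : ContDiff ℝ (⊤ : ℕ∞) X) (hY : ContDiff ℝ (⊤ : ℕ∞) Y) (p z : E) :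
    B (fderiv ℝ (fun q => Ω q (Y q)) p (X p)
        - fderiv ℝ (fun q => Ω q (X q)) p (Y p)
        - Ω p (fderiv ℝ Y p (X p) - fderiv ℝ X p (Y p))) (Ω p z)
      = tangentialDefect B g Ω nabla X Y p z - tangentialDefect B g Ω nabla Y X p z := by
  have htf' := congrArg (fun w => g p w z) (htf X Y hX hY p)
  simp only [map_sub, LinearMap.sub_apply] at htf' ⊢
  simp only [tangentialDefect, ha]
  linarith

theorem tangentialDefect_neg_swap [FiniteDimensional ℝ V]
    (hBsymm : ∀ u v : V, B u v = B v u) (hgsymm : ∀ p (v w : E), g p v w = g p w v)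
    (hΩ : ContDiff ℝ (⊤ : ℕ∞) Ω) (ha : ∀ p (v w : E), B (Ω p v) (Ω p w) = g p v w)
    (hmetric : ∀ X Y Z : E → E, ContDiff ℝ (⊤ : ℕ∞) X → ContDiff ℝ (⊤ : ℕ∞) Y →
      ContDiff ℝ (⊤ : ℕ∞) Z → ∀ p,
      fderiv ℝ (fun q => g q (Y q) (Z q)) p (X p)
        = g p (nabla X Y p) (Z p) + g p (Y p) (nabla X Z p))
    {X Y Z : E → E} (hX : ContDiff ℝ (⊤ : ℕ∞) X) (hY : ContDiff ℝ (⊤ : ℕ∞) Y)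
    (hZ : ContDiff ℝ (⊤ : ℕ∞) Z) (p : E) :
    tangentialDefect B g Ω nabla X Y p (Z p) = -tangentialDefect B g Ω nabla X Z p (Y p) := by
  have hΩY := (hΩ.clm_apply hY).differentiable (by simp) p
  have hΩZ := (hΩ.clm_apply hZ).differentiable (by simp) p
  have hflat := hmetric X Y Z hX hY hZ p
  simp only [← ha] at hflat
  rw [fderiv_bilinear_apply B hΩY hΩZ, hBsymm (Ω p (Y p)), ha, ha, hgsymm p (Y p)] at hflat
  simp only [tangentialDefect]
  linarith

end VirtualImmersion

theorem stmt_12_general {E V : Type*}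
    [NormedAddCommGroup E] [NormedSpace ℝ E]
    [NormedAddCommGroup V] [NormedSpace ℝ V] [FiniteDimensional ℝ V]
    -- the nondegenerate symmetric bilinear form on V
    (B : V →ₗ[ℝ] V →ₗ[ℝ] ℝ) (hBsymm : ∀ u v : V, B u v = B v u)
    -- the Riemannian metric g
    (g : E → E →ₗ[ℝ] E →ₗ[ℝ] ℝ) (hgsymm : ∀ p (v w : E), g p v w = g p w v)
    -- the V-valued one-form Ω, satisfying condition (a)
    (Ω : E → (E →L[ℝ] V)) (hΩ : ContDiff ℝ (⊤ : ℕ∞) Ω)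
    (ha : ∀ p (v w : E), B (Ω p v) (Ω p w) = g p v w)
    -- the Levi-Civita connection ∇ of g: torsion-free and metric
    (nabla : (E → E) → (E → E) → (E → E))
    (htf : ∀ X Y : E → E, ContDiff ℝ (⊤ : ℕ∞) X → ContDiff ℝ (⊤ : ℕ∞) Y →
      ∀ p, nabla X Y p - nabla Y X p = fderiv ℝ Y p (X p) - fderiv ℝ X p (Y p))
    (hmetric : ∀ X Y Z : E → E, ContDiff ℝ (⊤ : ℕ∞) X → ContDiff ℝ (⊤ : ℕ∞) Y →
      ContDiff ℝ (⊤ : ℕ∞) Z → ∀ p,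
      fderiv ℝ (fun q => g q (Y q) (Z q)) p (X p)
        = g p (nabla X Y p) (Z p) + g p (Y p) (nabla X Z p)) :
    -- condition (b): ⟨dΩ(X,Y), Ω(Z)⟩ = 0 ...
    (∀ X Y : E → E, ContDiff ℝ (⊤ : ℕ∞) X → ContDiff ℝ (⊤ : ℕ∞) Y → ∀ p (z : E),
        B (fderiv ℝ (fun q => Ω q (Y q)) p (X p)
            - fderiv ℝ (fun q => Ω q (X q)) p (Y p)
            - Ω p (fderiv ℝ Y p (X p) - fderiv ℝ X p (Y p))) (Ω p z) = 0)
    -- ... iff the tangential part of the flat connection D is ∇: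
    ↔ (∀ X Y : E → E, ContDiff ℝ (⊤ : ℕ∞) X → ContDiff ℝ (⊤ : ℕ∞) Y → ∀ p (z : E),
        B (fderiv ℝ (fun q => Ω q (Y q)) p (X p)) (Ω p z) = g p (nabla X Y p) z) := by
  constructor
  · intro hb X Y hX hY p z
    let T (X Y Z : {X : E → E // ContDiff ℝ (⊤ : ℕ∞) X}) : ℝ :=
      tangentialDefect B g Ω nabla X Y p (Z.1 p)
    have hcomm : ∀ X Y Z, T X Y Z = T Y X Z := fun X Y Z => sub_eq_zero.mp <| by
      rw [← pairing_dΩ_eq_tangentialDefect_sub ha htf X.2 Y.2]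
      exact hb X Y X.2 Y.2 p _
    have hanti : ∀ X Y Z, T X Y Z = -T X Z Y := fun X Y Z =>
      tangentialDefect_neg_swap hBsymm hgsymm hΩ ha hmetric X.2 Y.2 Z.2 p
    exact sub_eq_zero.mp <| eq_zero_of_comm_of_neg_swap hcomm hanti ⟨X, hX⟩ ⟨Y, hY⟩
      ⟨fun _ => z, contDiff_const⟩
  · intro hc X Y hX hY p z
    rw [pairing_dΩ_eq_tangentialDefect_sub ha htf hX hY, tangentialDefect, tangentialDefect,
      hc X Y hX hY, hc Y X hY hX, sub_self, sub_self, sub_self]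

/-- (Proposition: equivalent definition of virtual immersion, in a
chart model where the manifold `M` is a finite-dimensional real vector space `E`,
vector fields are smooth maps `E → E`, the flat connection `D` on the trivial
bundle `M × V` is `D_X s = fderiv s (X ·)`, and `[X,Y] = D_X Y − D_Y X`.)
Let `g` be a Riemannian metric, `V` pseudo-Euclidean with form `B`, and `Ω` a
`V`-valued one-form with `B(Ω X, Ω Y) = g(X,Y)`. Then `B(dΩ(X,Y), Ω Z) = 0` for
all `X,Y,Z` holds iff the tangential part of `D`, transported via `Ω`, is the
Levi-Civita connection `∇` of `g`, i.e. `B(D_X Ω(Y), Ω z) = g(∇_X Y, z)`. -/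
theorem stmt_12 {E V : Type*}
    [NormedAddCommGroup E] [NormedSpace ℝ E] [FiniteDimensional ℝ E]
    [NormedAddCommGroup V] [NormedSpace ℝ V] [FiniteDimensional ℝ V]
    -- the nondegenerate symmetric bilinear form on V
    (B : V →ₗ[ℝ] V →ₗ[ℝ] ℝ) (hBsymm : ∀ u v : V, B u v = B v u)
    (hBnd : ∀ u : V, (∀ v : V, B u v = 0) → u = 0)
    -- the Riemannian metric g
    (g : E → E →ₗ[ℝ] E →ₗ[ℝ] ℝ) (hgsymm : ∀ p (v w : E), g p v w = g p w v)
    (hgpos : ∀ p (v : E), v ≠ 0 → 0 < g p v v)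
    -- the V-valued one-form Ω, satisfying condition (a)
    (Ω : E → (E →L[ℝ] V)) (hΩ : ContDiff ℝ (⊤ : ℕ∞) Ω)
    (ha : ∀ p (v w : E), B (Ω p v) (Ω p w) = g p v w)
    -- the Levi-Civita connection ∇ of g: torsion-free and metric
    (nabla : (E → E) → (E → E) → (E → E))
    (htf : ∀ X Y : E → E, ContDiff ℝ (⊤ : ℕ∞) X → ContDiff ℝ (⊤ : ℕ∞) Y →
      ∀ p, nabla X Y p - nabla Y X p = fderiv ℝ Y p (X p) - fderiv ℝ X p (Y p))
    (hmetric : ∀ X Y Z : E → E, ContDiff ℝ (⊤ : ℕ∞) X → ContDiff ℝ (⊤ : ℕ∞) Y →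
      ContDiff ℝ (⊤ : ℕ∞) Z → ∀ p,
      fderiv ℝ (fun q => g q (Y q) (Z q)) p (X p)
        = g p (nabla X Y p) (Z p) + g p (Y p) (nabla X Z p)) :
    -- condition (b): ⟨dΩ(X,Y), Ω(Z)⟩ = 0 ...
    (∀ X Y : E → E, ContDiff ℝ (⊤ : ℕ∞) X → ContDiff ℝ (⊤ : ℕ∞) Y → ∀ p (z : E),
        B (fderiv ℝ (fun q => Ω q (Y q)) p (X p)
            - fderiv ℝ (fun q => Ω q (X q)) p (Y p)
            - Ω p (fderiv ℝ Y p (X p) - fderiv ℝ X p (Y p))) (Ω p z) = 0)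
    -- ... iff the tangential part of the flat connection D is ∇:
    ↔ (∀ X Y : E → E, ContDiff ℝ (⊤ : ℕ∞) X → ContDiff ℝ (⊤ : ℕ∞) Y → ∀ p (z : E),
        B (fderiv ℝ (fun q => Ω q (Y q)) p (X p)) (Ω p z) = g p (nabla X Y p) z) :=
  stmt_12_general B hBsymm g hgsymm Ω hΩ ha nabla htf hmetric
end

section
/- Let Ω: TM → V be a virtual immersion of a Riemannian manifold M with second fundamental form II. If II is symmetric, then dΩ = 0, and hence locally Ω = dφ for an isometric immersion φ: M → V. -/
/-!
Torsion-freeness of `∇` gives `dΩ(X, Y) = II(X, Y) - II(Y, X)`, so a symmetric `II` makes `Ω`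
closed. On constant vector fields closedness says that `DΩ` is symmetric, and a closed one-form
on the (convex) model space is exact by the Poincaré lemma.
-/

section

variable {𝕜 E F : Type*} [NontriviallyNormedField 𝕜]
  [NormedAddCommGroup E] [NormedSpace 𝕜 E] [NormedAddCommGroup F] [NormedSpace 𝕜 F]

theorem fderiv_clm_apply_const {ω : E → E →L[𝕜] F} {p : E} (hω : DifferentiableAt 𝕜 ω p)
    (w : E) : fderiv 𝕜 (fun q => ω q w) p = (fderiv 𝕜 ω p).flip w := by
  simp [fderiv_clm_apply hω (differentiableAt_const w)]

theorem fderiv_apply_comm_of_fderiv_clm_apply_const_comm {ω : E → E →L[𝕜] F} {p : E}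
    (hω : DifferentiableAt 𝕜 ω p)
    (hclosed : ∀ v w, fderiv 𝕜 (fun q => ω q w) p v = fderiv 𝕜 (fun q => ω q v) p w)
    (v w : E) : fderiv 𝕜 ω p v w = fderiv 𝕜 ω p w v := by
  simpa [fderiv_clm_apply_const hω] using hclosed v w

end

theorem stmt_13_general {E V : Type*}
    [NormedAddCommGroup E] [NormedSpace ℝ E]
    [NormedAddCommGroup V] [NormedSpace ℝ V] [FiniteDimensional ℝ V]
    -- the nondegenerate symmetric bilinear form on V
    (B : V →ₗ[ℝ] V →ₗ[ℝ] ℝ)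
    -- the Riemannian metric g
    (g : E → E →ₗ[ℝ] E →ₗ[ℝ] ℝ)
    -- the V-valued one-form Ω, satisfying condition (a)
    (Ω : E → (E →L[ℝ] V)) (hΩ : ContDiff ℝ (⊤ : ℕ∞) Ω)
    (ha : ∀ p (v w : E), B (Ω p v) (Ω p w) = g p v w)
    -- the Levi-Civita connection ∇ of g: torsion-free and metric
    (nabla : (E → E) → (E → E) → (E → E))
    (htf : ∀ X Y : E → E, ContDiff ℝ (⊤ : ℕ∞) X → ContDiff ℝ (⊤ : ℕ∞) Y →
      ∀ p, nabla X Y p - nabla Y X p = fderiv ℝ Y p (X p) - fderiv ℝ X p (Y p))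
    -- the second fundamental form II(X,Y) = D_X(Ω(Y)) − Ω(∇_X Y)
    (II : (E → E) → (E → E) → E → V)
    (hII : ∀ (X Y : E → E) p,
      II X Y p = fderiv ℝ (fun q => Ω q (Y q)) p (X p) - Ω p (nabla X Y p))
    -- II is symmetric
    (hsym : ∀ X Y : E → E, ContDiff ℝ (⊤ : ℕ∞) X → ContDiff ℝ (⊤ : ℕ∞) Y →
      ∀ p, II X Y p = II Y X p) :
    -- dΩ = 0 ...
    (∀ X Y : E → E, ContDiff ℝ (⊤ : ℕ∞) X → ContDiff ℝ (⊤ : ℕ∞) Y → ∀ p,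
        fderiv ℝ (fun q => Ω q (Y q)) p (X p)
          - fderiv ℝ (fun q => Ω q (X q)) p (Y p)
          - Ω p (fderiv ℝ Y p (X p) - fderiv ℝ X p (Y p)) = 0)
    -- ... and hence Ω = dφ with φ an isometric immersion
    ∧ ∃ φ : E → V, ∀ p, fderiv ℝ φ p = Ω p
        ∧ ∀ v w : E, B (fderiv ℝ φ p v) (fderiv ℝ φ p w) = g p v w := by
  have hΩd : Differentiable ℝ Ω := hΩ.differentiable (by simp)
  have hclosed : ∀ X Y : E → E, ContDiff ℝ (⊤ : ℕ∞) X → ContDiff ℝ (⊤ : ℕ∞) Y → ∀ p,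
      fderiv ℝ (fun q => Ω q (Y q)) p (X p)
        - fderiv ℝ (fun q => Ω q (X q)) p (Y p)
        - Ω p (fderiv ℝ Y p (X p) - fderiv ℝ X p (Y p)) = 0 := by
    intro X Y hX hY p
    rw [← htf X Y hX hY p, map_sub, sub_sub_sub_comm, ← hII, ← hII, hsym X Y hX hY p, sub_self]
  have hdΩ_symm (p v w : E) : fderiv ℝ Ω p v w = fderiv ℝ Ω p w v :=
    fderiv_apply_comm_of_fderiv_clm_apply_const_comm (hΩd p) (fun v w => by
      simpa [sub_eq_zero] using hclosed _ _ contDiff_const contDiff_const p) v w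
  obtain ⟨φ, hφ⟩ := convex_univ.exists_forall_hasFDerivAt_of_fderiv_symmetric isOpen_univ
    hΩd.differentiableOn fun p _ => hdΩ_symm p
  refine ⟨hclosed, φ, fun p => ?_⟩
  have hdφ : fderiv ℝ φ p = Ω p := (hφ p trivial).fderiv
  exact ⟨hdφ, fun v w => hdφ ▸ ha p v w⟩

/-- (In the chart model where the manifold is a finite-dimensional
real vector space `E`, the flat connection `D` on `M × V` is `fderiv`, and `∇`
is the Levi-Civita connection of `g`.) If the second fundamental form
`II(X,Y) = D_X(Ω(Y)) − Ω(∇_X Y)` of a virtual immersion `Ω` is symmetric, then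
`dΩ = 0`, and hence `Ω = dφ` for an isometric immersion `φ : M → V`. -/
theorem stmt_13 {E V : Type*}
    [NormedAddCommGroup E] [NormedSpace ℝ E] [FiniteDimensional ℝ E]
    [NormedAddCommGroup V] [NormedSpace ℝ V] [FiniteDimensional ℝ V]
    -- the nondegenerate symmetric bilinear form on V
    (B : V →ₗ[ℝ] V →ₗ[ℝ] ℝ) (hBsymm : ∀ u v : V, B u v = B v u)
    (hBnd : ∀ u : V, (∀ v : V, B u v = 0) → u = 0)
    -- the Riemannian metric g
    (g : E → E →ₗ[ℝ] E →ₗ[ℝ] ℝ) (hgsymm : ∀ p (v w : E), g p v w = g p w v)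
    (hgpos : ∀ p (v : E), v ≠ 0 → 0 < g p v v)
    -- the V-valued one-form Ω, satisfying condition (a)
    (Ω : E → (E →L[ℝ] V)) (hΩ : ContDiff ℝ (⊤ : ℕ∞) Ω)
    (ha : ∀ p (v w : E), B (Ω p v) (Ω p w) = g p v w)
    -- condition (b): ⟨dΩ(X,Y), Ω(Z)⟩ = 0
    (hb : ∀ X Y : E → E, ContDiff ℝ (⊤ : ℕ∞) X → ContDiff ℝ (⊤ : ℕ∞) Y → ∀ p (z : E),
        B (fderiv ℝ (fun q => Ω q (Y q)) p (X p)
            - fderiv ℝ (fun q => Ω q (X q)) p (Y p)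
            - Ω p (fderiv ℝ Y p (X p) - fderiv ℝ X p (Y p))) (Ω p z) = 0)
    -- the Levi-Civita connection ∇ of g: torsion-free and metric
    (nabla : (E → E) → (E → E) → (E → E))
    (hns : ∀ X Y : E → E, ContDiff ℝ (⊤ : ℕ∞) X → ContDiff ℝ (⊤ : ℕ∞) Y →
      ContDiff ℝ (⊤ : ℕ∞) (nabla X Y))
    (htf : ∀ X Y : E → E, ContDiff ℝ (⊤ : ℕ∞) X → ContDiff ℝ (⊤ : ℕ∞) Y →
      ∀ p, nabla X Y p - nabla Y X p = fderiv ℝ Y p (X p) - fderiv ℝ X p (Y p))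
    (hmetric : ∀ X Y Z : E → E, ContDiff ℝ (⊤ : ℕ∞) X → ContDiff ℝ (⊤ : ℕ∞) Y →
      ContDiff ℝ (⊤ : ℕ∞) Z → ∀ p,
      fderiv ℝ (fun q => g q (Y q) (Z q)) p (X p)
        = g p (nabla X Y p) (Z p) + g p (Y p) (nabla X Z p))
    -- the second fundamental form II(X,Y) = D_X(Ω(Y)) − Ω(∇_X Y)
    (II : (E → E) → (E → E) → E → V)
    (hII : ∀ (X Y : E → E) p,
      II X Y p = fderiv ℝ (fun q => Ω q (Y q)) p (X p) - Ω p (nabla X Y p))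
    -- II is symmetric
    (hsym : ∀ X Y : E → E, ContDiff ℝ (⊤ : ℕ∞) X → ContDiff ℝ (⊤ : ℕ∞) Y →
      ∀ p, II X Y p = II Y X p) :
    -- dΩ = 0 ...
    (∀ X Y : E → E, ContDiff ℝ (⊤ : ℕ∞) X → ContDiff ℝ (⊤ : ℕ∞) Y → ∀ p,
        fderiv ℝ (fun q => Ω q (Y q)) p (X p)
          - fderiv ℝ (fun q => Ω q (X q)) p (Y p)
          - Ω p (fderiv ℝ Y p (X p) - fderiv ℝ X p (Y p)) = 0)
    -- ... and hence Ω = dφ with φ an isometric immersion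
    ∧ ∃ φ : E → V, ∀ p, fderiv ℝ φ p = Ω p
        ∧ ∀ v w : E, B (fderiv ℝ φ p v) (fderiv ℝ φ p w) = g p v w :=
  stmt_13_general B g Ω hΩ ha nabla htf II hII hsym
end

section
/- Let Ω: TM → V be a virtual immersion of a Riemannian manifold with second fundamental form II. Then the Gauss equation holds: R(X,Y,Z,W) = ⟨II(Y,W),II(X,Z)⟩ − ⟨II(X,W),II(Y,Z)⟩, where R is the Riemann curvature tensor of M with sign convention R(X,Y)Z = ∇_Y∇_X Z − ∇_X∇_Y Z + ∇_{[X,Y]}Z. -/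
/-!
Write `D_X s = ds(X)` for the flat connection on `E × V`, so that
`D_X (Ω Y) = Ω (∇_X Y) + II(X, Y)`. Differentiating `⟨Ω Y, Ω Z⟩ = g(Y, Z)` along `X` shows that
`⟨II(X, Y), Ω Z⟩` is skew in `(Y, Z)`, while condition (b) and torsion-freeness make it symmetric
in `(X, Y)`; hence it vanishes, i.e. `II` is normal. Consequently
`⟨D_Y D_X (Ω Z), Ω W⟩ = g(∇_Y ∇_X Z, W) - ⟨II(X, Z), II(Y, W)⟩`, and pairing the flatness of `D`,
`D_{[X,Y]} = D_X D_Y - D_Y D_X`, with `Ω W` gives the Gauss equation.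
-/

open VectorField
open scoped ContDiff

theorem eq_zero_of_symm_of_antisymm {α G : Type*} [AddGroup G] [IsAddTorsionFree G]
    {T : α → α → α → G} (hsymm : ∀ a b c, T a b c = T b a c)
    (hanti : ∀ a b c, T a b c = -T a c b) (a b c : α) : T a b c = 0 := by
  refine self_eq_neg.mp ?_
  calc T a b c = -T b c a := by rw [hsymm, hanti]
    _ = -T c b a := by rw [hsymm]
    _ = T c a b := by rw [hanti, neg_neg]
    _ = T a c b := hsymm ..
    _ = -T a b c := hanti ..

theorem LinearMap.fderiv_of_bilinear_apply {𝕜 E F F' G : Type*}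
    [NontriviallyNormedField 𝕜] [CompleteSpace 𝕜] [NormedAddCommGroup E] [NormedSpace 𝕜 E]
    [NormedAddCommGroup F] [NormedSpace 𝕜 F] [FiniteDimensional 𝕜 F]
    [NormedAddCommGroup F'] [NormedSpace 𝕜 F'] [FiniteDimensional 𝕜 F']
    [NormedAddCommGroup G] [NormedSpace 𝕜 G]
    (B : F →ₗ[𝕜] F' →ₗ[𝕜] G) {u : E → F} {v : E → F'} {p : E}
    (hu : DifferentiableAt 𝕜 u p) (hv : DifferentiableAt 𝕜 v p) (w : E) :
    fderiv 𝕜 (fun q => B (u q) (v q)) p w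
      = B (fderiv 𝕜 u p w) (v p) + B (u p) (fderiv 𝕜 v p w) := by
  rw [show (fun q => B (u q) (v q)) = fun q => B.toContinuousBilinearMap (u q) (v q) from rfl,
    B.toContinuousBilinearMap.fderiv_of_bilinear hu hv]
  simp [add_comm]

section VirtualImmersion

variable {E V : Type*} [NormedAddCommGroup E] [NormedSpace ℝ E]
  [NormedAddCommGroup V] [NormedSpace ℝ V]

/- The manifold is modelled by a single chart `E`: vector fields are maps `E → E`, and `∇` is only
constrained on smooth ones. -/
structure IsLeviCivitaConnection (g : E → E →ₗ[ℝ] E →ₗ[ℝ] ℝ)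
    (nabla : (E → E) → (E → E) → E → E) : Prop where
  contDiff {X Y : E → E} : ContDiff ℝ ∞ X → ContDiff ℝ ∞ Y → ContDiff ℝ ∞ (nabla X Y)
  torsion_free {X Y : E → E} : ContDiff ℝ ∞ X → ContDiff ℝ ∞ Y →
    ∀ p, nabla X Y p - nabla Y X p = lieBracket ℝ X Y p
  metric {X Y Z : E → E} : ContDiff ℝ ∞ X → ContDiff ℝ ∞ Y → ContDiff ℝ ∞ Z → ∀ p,
    fderiv ℝ (fun q => g q (Y q) (Z q)) p (X p) = g p (nabla X Y p) (Z p) + g p (Y p) (nabla X Z p)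

structure IsVirtualImmersion (B : V →ₗ[ℝ] V →ₗ[ℝ] ℝ) (g : E → E →ₗ[ℝ] E →ₗ[ℝ] ℝ)
    (Ω : E → E →L[ℝ] V) : Prop where
  contDiff : ContDiff ℝ ∞ Ω
  pullback_eq : ∀ p v w, B (Ω p v) (Ω p w) = g p v w
  exteriorDeriv_normal {X Y : E → E} : ContDiff ℝ ∞ X → ContDiff ℝ ∞ Y → ∀ p z,
    B (fderiv ℝ (fun q => Ω q (Y q)) p (X p) - fderiv ℝ (fun q => Ω q (X q)) p (Y p)
      - Ω p (lieBracket ℝ X Y p)) (Ω p z) = 0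

noncomputable def secondFundamentalForm (Ω : E → E →L[ℝ] V) (nabla : (E → E) → (E → E) → E → E)
    (X Y : E → E) (p : E) : V :=
  fderiv ℝ (fun q => Ω q (Y q)) p (X p) - Ω p (nabla X Y p)

noncomputable def curvature (nabla : (E → E) → (E → E) → E → E) (X Y Z : E → E) (p : E) : E :=
  nabla Y (nabla X Z) p - nabla X (nabla Y Z) p + nabla (lieBracket ℝ X Y) Z p

variable {B : V →ₗ[ℝ] V →ₗ[ℝ] ℝ} {g : E → E →ₗ[ℝ] E →ₗ[ℝ] ℝ} {Ω : E → E →L[ℝ] V}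
  {nabla : (E → E) → (E → E) → E → E} {X Y Z W : E → E}

variable (nabla) in
theorem gauss_formula (p : E) :
    fderiv ℝ (fun q => Ω q (Y q)) p (X p)
      = Ω p (nabla X Y p) + secondFundamentalForm Ω nabla X Y p := by
  rw [secondFundamentalForm, add_sub_cancel]

theorem IsVirtualImmersion.contDiff_apply (hΩ : IsVirtualImmersion B g Ω) (hX : ContDiff ℝ ∞ X) :
    ContDiff ℝ ∞ (fun q => Ω q (X q)) :=
  hΩ.contDiff.clm_apply hX

theorem contDiff_secondFundamentalForm (hΩ : IsVirtualImmersion B g Ω)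
    (hnabla : IsLeviCivitaConnection g nabla) (hX : ContDiff ℝ ∞ X) (hY : ContDiff ℝ ∞ Y) :
    ContDiff ℝ ∞ (secondFundamentalForm Ω nabla X Y) :=
  (((hΩ.contDiff_apply hY).fderiv_right le_rfl).clm_apply hX).sub
    (hΩ.contDiff_apply (hnabla.contDiff hX hY))

theorem pairing_secondFundamentalForm_comm (hΩ : IsVirtualImmersion B g Ω)
    (hnabla : IsLeviCivitaConnection g nabla) (hX : ContDiff ℝ ∞ X) (hY : ContDiff ℝ ∞ Y)
    (p z : E) :
    B (secondFundamentalForm Ω nabla X Y p) (Ω p z)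
      = B (secondFundamentalForm Ω nabla Y X p) (Ω p z) := by
  have hsub : secondFundamentalForm Ω nabla X Y p - secondFundamentalForm Ω nabla Y X p
      = fderiv ℝ (fun q => Ω q (Y q)) p (X p) - fderiv ℝ (fun q => Ω q (X q)) p (Y p)
        - Ω p (lieBracket ℝ X Y p) := by
    rw [secondFundamentalForm, secondFundamentalForm, ← hnabla.torsion_free hX hY, map_sub]
    abel
  rw [← sub_eq_zero, ← LinearMap.sub_apply, ← map_sub, hsub]
  exact hΩ.exteriorDeriv_normal hX hY p z

variable [FiniteDimensional ℝ V]

theorem pairing_secondFundamentalForm_add_swap (hB : LinearMap.BilinForm.IsSymm B)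
    (hΩ : IsVirtualImmersion B g Ω) (hnabla : IsLeviCivitaConnection g nabla)
    (hX : ContDiff ℝ ∞ X) (hY : ContDiff ℝ ∞ Y) (hZ : ContDiff ℝ ∞ Z) (p : E) :
    B (secondFundamentalForm Ω nabla X Y p) (Ω p (Z p))
      + B (secondFundamentalForm Ω nabla X Z p) (Ω p (Y p)) = 0 := by
  have hmetric := hnabla.metric hX hY hZ p
  simp_rw [← hΩ.pullback_eq] at hmetric
  rw [B.fderiv_of_bilinear_apply ((hΩ.contDiff_apply hY).differentiable (by simp) p)
    ((hΩ.contDiff_apply hZ).differentiable (by simp) p), gauss_formula nabla, gauss_formula nabla,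
    map_add, LinearMap.add_apply, map_add,
    hB.eq (Ω p (Y p)) (secondFundamentalForm Ω nabla X Z p)] at hmetric
  linarith

theorem pairing_secondFundamentalForm_eq_zero (hB : LinearMap.BilinForm.IsSymm B)
    (hΩ : IsVirtualImmersion B g Ω) (hnabla : IsLeviCivitaConnection g nabla)
    (hX : ContDiff ℝ ∞ X) (hY : ContDiff ℝ ∞ Y) (p z : E) :
    B (secondFundamentalForm Ω nabla X Y p) (Ω p z) = 0 := by
  let T (A C D : {X : E → E // ContDiff ℝ ∞ X}) : ℝ :=
    B (secondFundamentalForm Ω nabla A C p) (Ω p (D.1 p))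
  refine eq_zero_of_symm_of_antisymm (T := T) (fun A C D => ?_) (fun A C D => ?_)
    ⟨X, hX⟩ ⟨Y, hY⟩ ⟨fun _ => z, contDiff_const⟩
  · exact pairing_secondFundamentalForm_comm hΩ hnabla A.2 C.2 p _
  · exact eq_neg_of_add_eq_zero_left
      (pairing_secondFundamentalForm_add_swap hB hΩ hnabla A.2 C.2 D.2 p)

theorem pairing_fderiv_apply_eq_metric_nabla (hB : LinearMap.BilinForm.IsSymm B)
    (hΩ : IsVirtualImmersion B g Ω) (hnabla : IsLeviCivitaConnection g nabla)
    (hX : ContDiff ℝ ∞ X) (hY : ContDiff ℝ ∞ Y) (p z : E) :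
    B (fderiv ℝ (fun q => Ω q (Y q)) p (X p)) (Ω p z) = g p (nabla X Y p) z := by
  rw [gauss_formula nabla, map_add, LinearMap.add_apply,
    pairing_secondFundamentalForm_eq_zero hB hΩ hnabla hX hY, hΩ.pullback_eq, add_zero]

theorem pairing_fderiv_secondFundamentalForm_apply (hB : LinearMap.BilinForm.IsSymm B)
    (hΩ : IsVirtualImmersion B g Ω) (hnabla : IsLeviCivitaConnection g nabla)
    (hX : ContDiff ℝ ∞ X) (hZ : ContDiff ℝ ∞ Z) (hW : ContDiff ℝ ∞ W) (p : E) :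
    B (fderiv ℝ (secondFundamentalForm Ω nabla X Z) p (Y p)) (Ω p (W p))
      = -B (secondFundamentalForm Ω nabla X Z p) (secondFundamentalForm Ω nabla Y W p) := by
  have hconst : (fun q => B (secondFundamentalForm Ω nabla X Z q) (Ω q (W q))) = fun _ => 0 :=
    funext fun q => pairing_secondFundamentalForm_eq_zero hB hΩ hnabla hX hZ q (W q)
  have h := B.fderiv_of_bilinear_apply
    ((contDiff_secondFundamentalForm hΩ hnabla hX hZ).differentiable (by simp) p)
    ((hΩ.contDiff_apply hW).differentiable (by simp) p) (Y p)
  rw [hconst, fderiv_fun_const, Pi.zero_apply, zero_apply, gauss_formula nabla,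
    map_add, pairing_secondFundamentalForm_eq_zero hB hΩ hnabla hX hZ, zero_add] at h
  linarith

theorem pairing_fderiv_fderiv_apply (hB : LinearMap.BilinForm.IsSymm B)
    (hΩ : IsVirtualImmersion B g Ω) (hnabla : IsLeviCivitaConnection g nabla)
    (hX : ContDiff ℝ ∞ X) (hY : ContDiff ℝ ∞ Y) (hZ : ContDiff ℝ ∞ Z) (hW : ContDiff ℝ ∞ W)
    (p : E) :
    B (fderiv ℝ (fun q => fderiv ℝ (fun r => Ω r (Z r)) q (X q)) p (Y p)) (Ω p (W p))
      = g p (nabla Y (nabla X Z) p) (W p)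
        - B (secondFundamentalForm Ω nabla X Z p) (secondFundamentalForm Ω nabla Y W p) := by
  have hsplit : (fun q => fderiv ℝ (fun r => Ω r (Z r)) q (X q))
      = fun q => Ω q (nabla X Z q) + secondFundamentalForm Ω nabla X Z q :=
    funext (gauss_formula nabla)
  rw [hsplit, fderiv_fun_add
      ((hΩ.contDiff_apply (hnabla.contDiff hX hZ)).differentiable (by simp) p)
      ((contDiff_secondFundamentalForm hΩ hnabla hX hZ).differentiable (by simp) p),
    add_apply, map_add, LinearMap.add_apply,
    pairing_fderiv_apply_eq_metric_nabla hB hΩ hnabla hY (hnabla.contDiff hX hZ),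
    pairing_fderiv_secondFundamentalForm_apply hB hΩ hnabla hX hZ hW, sub_eq_add_neg]

theorem gauss_equation (hB : LinearMap.BilinForm.IsSymm B)
    (hΩ : IsVirtualImmersion B g Ω) (hnabla : IsLeviCivitaConnection g nabla)
    (hX : ContDiff ℝ ∞ X) (hY : ContDiff ℝ ∞ Y) (hZ : ContDiff ℝ ∞ Z) (hW : ContDiff ℝ ∞ W)
    (p : E) :
    g p (curvature nabla X Y Z p) (W p)
      = B (secondFundamentalForm Ω nabla Y W p) (secondFundamentalForm Ω nabla X Z p)
        - B (secondFundamentalForm Ω nabla X W p) (secondFundamentalForm Ω nabla Y Z p) := by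
  have hflat := fderiv_apply_lieBracket (hΩ.contDiff_apply hZ).contDiffAt
    (by simpa using ENat.LEInfty.out) (hY.differentiable (by simp) p)
    (hX.differentiable (by simp) p)
  have hbracket := congrArg (fun v => B v (Ω p (W p))) hflat
  simp only [map_sub, LinearMap.sub_apply] at hbracket
  rw [pairing_fderiv_apply_eq_metric_nabla hB hΩ hnabla (hX.lieBracket_vectorField hY le_rfl) hZ,
    pairing_fderiv_fderiv_apply hB hΩ hnabla hX hY hZ hW,
    pairing_fderiv_fderiv_apply hB hΩ hnabla hY hX hZ hW] at hbracket
  rw [curvature, map_add, map_sub, LinearMap.add_apply, LinearMap.sub_apply, hbracket,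
    hB.eq (secondFundamentalForm Ω nabla Y W p), hB.eq (secondFundamentalForm Ω nabla X W p)]
  ring

end VirtualImmersion

theorem stmt_15_general {E V : Type*}
    [NormedAddCommGroup E] [NormedSpace ℝ E]
    [NormedAddCommGroup V] [NormedSpace ℝ V] [FiniteDimensional ℝ V]
    -- the nondegenerate symmetric bilinear form on V
    (B : V →ₗ[ℝ] V →ₗ[ℝ] ℝ) (hBsymm : ∀ u v : V, B u v = B v u)
    -- the Riemannian metric g
    (g : E → E →ₗ[ℝ] E →ₗ[ℝ] ℝ)
    -- the V-valued one-form Ω, satisfying condition (a)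
    (Ω : E → (E →L[ℝ] V)) (hΩ : ContDiff ℝ (⊤ : ℕ∞) Ω)
    (ha : ∀ p (v w : E), B (Ω p v) (Ω p w) = g p v w)
    -- condition (b): ⟨dΩ(X,Y), Ω(Z)⟩ = 0
    (hb : ∀ X Y : E → E, ContDiff ℝ (⊤ : ℕ∞) X → ContDiff ℝ (⊤ : ℕ∞) Y → ∀ p (z : E),
        B (fderiv ℝ (fun q => Ω q (Y q)) p (X p)
            - fderiv ℝ (fun q => Ω q (X q)) p (Y p)
            - Ω p (fderiv ℝ Y p (X p) - fderiv ℝ X p (Y p))) (Ω p z) = 0)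
    -- the Levi-Civita connection ∇ of g: torsion-free and metric
    (nabla : (E → E) → (E → E) → (E → E))
    (hns : ∀ X Y : E → E, ContDiff ℝ (⊤ : ℕ∞) X → ContDiff ℝ (⊤ : ℕ∞) Y →
      ContDiff ℝ (⊤ : ℕ∞) (nabla X Y))
    (htf : ∀ X Y : E → E, ContDiff ℝ (⊤ : ℕ∞) X → ContDiff ℝ (⊤ : ℕ∞) Y →
      ∀ p, nabla X Y p - nabla Y X p = fderiv ℝ Y p (X p) - fderiv ℝ X p (Y p))
    (hmetric : ∀ X Y Z : E → E, ContDiff ℝ (⊤ : ℕ∞) X → ContDiff ℝ (⊤ : ℕ∞) Y →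
      ContDiff ℝ (⊤ : ℕ∞) Z → ∀ p,
      fderiv ℝ (fun q => g q (Y q) (Z q)) p (X p)
        = g p (nabla X Y p) (Z p) + g p (Y p) (nabla X Z p))
    -- the second fundamental form II(X,Y) = D_X(Ω(Y)) − Ω(∇_X Y)
    (II : (E → E) → (E → E) → E → V)
    (hII : ∀ (X Y : E → E) p,
      II X Y p = fderiv ℝ (fun q => Ω q (Y q)) p (X p) - Ω p (nabla X Y p))
    -- the curvature tensor R(X,Y)Z = ∇_Y ∇_X Z − ∇_X ∇_Y Z + ∇_{[X,Y]} Z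
    (Rt : (E → E) → (E → E) → (E → E) → E → E)
    (hRt : ∀ (X Y Z : E → E) p,
      Rt X Y Z p = nabla Y (nabla X Z) p - nabla X (nabla Y Z) p
        + nabla (fun q => fderiv ℝ Y q (X q) - fderiv ℝ X q (Y q)) Z p) :
    ∀ X Y Z W : E → E, ContDiff ℝ (⊤ : ℕ∞) X → ContDiff ℝ (⊤ : ℕ∞) Y →
      ContDiff ℝ (⊤ : ℕ∞) Z → ContDiff ℝ (⊤ : ℕ∞) W → ∀ p,
      g p (Rt X Y Z p) (W p)
        = B (II Y W p) (II X Z p) - B (II X W p) (II Y Z p) := by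
  intro X Y Z W hX hY hZ hW p
  obtain rfl : II = secondFundamentalForm Ω nabla := by
    funext X Y p
    exact hII X Y p
  obtain rfl : Rt = curvature nabla := by
    funext X Y Z p
    exact hRt X Y Z p
  exact gauss_equation ⟨hBsymm⟩ ⟨hΩ, ha, hb _ _⟩ ⟨hns _ _, htf _ _, hmetric _ _ _⟩
    hX hY hZ hW p

/-- (Gauss equation, in the chart model where the manifold is a
finite-dimensional real vector space `E` and the flat connection `D` is
`fderiv`.) For a virtual immersion `Ω` with second fundamental form `II`, the
curvature tensor `R` of the Levi-Civita connection, with the sign convention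
`R(X,Y)Z = ∇_Y∇_X Z − ∇_X∇_Y Z + ∇_{[X,Y]}Z`, satisfies
`R(X,Y,Z,W) = ⟨II(Y,W),II(X,Z)⟩ − ⟨II(X,W),II(Y,Z)⟩`. -/
theorem stmt_15 {E V : Type*}
    [NormedAddCommGroup E] [NormedSpace ℝ E] [FiniteDimensional ℝ E]
    [NormedAddCommGroup V] [NormedSpace ℝ V] [FiniteDimensional ℝ V]
    -- the nondegenerate symmetric bilinear form on V
    (B : V →ₗ[ℝ] V →ₗ[ℝ] ℝ) (hBsymm : ∀ u v : V, B u v = B v u)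
    (hBnd : ∀ u : V, (∀ v : V, B u v = 0) → u = 0)
    -- the Riemannian metric g
    (g : E → E →ₗ[ℝ] E →ₗ[ℝ] ℝ) (hgsymm : ∀ p (v w : E), g p v w = g p w v)
    (hgpos : ∀ p (v : E), v ≠ 0 → 0 < g p v v)
    -- the V-valued one-form Ω, satisfying condition (a)
    (Ω : E → (E →L[ℝ] V)) (hΩ : ContDiff ℝ (⊤ : ℕ∞) Ω)
    (ha : ∀ p (v w : E), B (Ω p v) (Ω p w) = g p v w)
    -- condition (b): ⟨dΩ(X,Y), Ω(Z)⟩ = 0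
    (hb : ∀ X Y : E → E, ContDiff ℝ (⊤ : ℕ∞) X → ContDiff ℝ (⊤ : ℕ∞) Y → ∀ p (z : E),
        B (fderiv ℝ (fun q => Ω q (Y q)) p (X p)
            - fderiv ℝ (fun q => Ω q (X q)) p (Y p)
            - Ω p (fderiv ℝ Y p (X p) - fderiv ℝ X p (Y p))) (Ω p z) = 0)
    -- the Levi-Civita connection ∇ of g: torsion-free and metric
    (nabla : (E → E) → (E → E) → (E → E))
    (hns : ∀ X Y : E → E, ContDiff ℝ (⊤ : ℕ∞) X → ContDiff ℝ (⊤ : ℕ∞) Y →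
      ContDiff ℝ (⊤ : ℕ∞) (nabla X Y))
    (htf : ∀ X Y : E → E, ContDiff ℝ (⊤ : ℕ∞) X → ContDiff ℝ (⊤ : ℕ∞) Y →
      ∀ p, nabla X Y p - nabla Y X p = fderiv ℝ Y p (X p) - fderiv ℝ X p (Y p))
    (hmetric : ∀ X Y Z : E → E, ContDiff ℝ (⊤ : ℕ∞) X → ContDiff ℝ (⊤ : ℕ∞) Y →
      ContDiff ℝ (⊤ : ℕ∞) Z → ∀ p,
      fderiv ℝ (fun q => g q (Y q) (Z q)) p (X p)
        = g p (nabla X Y p) (Z p) + g p (Y p) (nabla X Z p))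
    -- the second fundamental form II(X,Y) = D_X(Ω(Y)) − Ω(∇_X Y)
    (II : (E → E) → (E → E) → E → V)
    (hII : ∀ (X Y : E → E) p,
      II X Y p = fderiv ℝ (fun q => Ω q (Y q)) p (X p) - Ω p (nabla X Y p))
    -- the curvature tensor R(X,Y)Z = ∇_Y ∇_X Z − ∇_X ∇_Y Z + ∇_{[X,Y]} Z
    (Rt : (E → E) → (E → E) → (E → E) → E → E)
    (hRt : ∀ (X Y Z : E → E) p,
      Rt X Y Z p = nabla Y (nabla X Z) p - nabla X (nabla Y Z) p
        + nabla (fun q => fderiv ℝ Y q (X q) - fderiv ℝ X q (Y q)) Z p) :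
    ∀ X Y Z W : E → E, ContDiff ℝ (⊤ : ℕ∞) X → ContDiff ℝ (⊤ : ℕ∞) Y →
      ContDiff ℝ (⊤ : ℕ∞) Z → ContDiff ℝ (⊤ : ℕ∞) W → ∀ p,
      g p (Rt X Y Z p) (W p)
        = B (II Y W p) (II X Z p) - B (II X W p) (II Y Z p) :=
  stmt_15_general B hBsymm g Ω hΩ ha hb nabla hns htf hmetric II hII Rt hRt
end
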